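/- arXiv:2507.21505 — 5 statements merged into one kernel-verified Lean document; each statement's English description precedes it below -/
import Mathlib

section
/- For every m ≥ 1, the group homomorphism i_m : G_m → G_{m+1} determined by s_i ↦ s_i for i = 0, …, m is injective. -/
/-- Iterated exponential: `E 0 n = n`, `E (m+1) n = 2 ^ E m n`. -/
def E : ℕ → ℕ → ℕ
  | 0, n => n
  | m + 1, n => 2 ^ E m n

/-- `Preceq f g` iff there is `C > 0` with `f n ≤ C * g (C*n + C) + C*n + C` for all `n`. -/
def Preceq (f g : ℕ → ℕ) : Prop :=
  ∃ C : ℕ, 0 < C ∧ ∀ n : ℕ, f n ≤ C * g (C * n + C) + C * n + C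

/-- Defining relations of the `m`-th iterated Baumslag–Solitar group:
`s_{i+1} s_i s_{i+1}⁻¹ = s_i²` for `i = 0, …, m-1`. -/
def bsRels (m : ℕ) : Set (FreeGroup (Fin (m + 1))) :=
  Set.range (fun i : Fin m =>
    FreeGroup.of i.succ * FreeGroup.of i.castSucc * (FreeGroup.of i.succ)⁻¹ *
      (FreeGroup.of i.castSucc ^ 2)⁻¹)

/-- The `m`-th iterated Baumslag–Solitar group. -/
abbrev IterBS (m : ℕ) := PresentedGroup (bsRels m)

/-- The generator `s_i` of `IterBS m`. -/
def sg {m : ℕ} (i : Fin (m + 1)) : IterBS m := PresentedGroup.of i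

/-- The element of `IterBS m` represented by a word on the generators and their inverses. -/
def evalWord {m : ℕ} (w : List (Fin (m + 1) × Bool)) : IterBS m :=
  (w.map (fun p => if p.2 then sg p.1 else (sg p.1)⁻¹)).prod

/-- Word length of `g ∈ IterBS m` with respect to the generators `s_0, …, s_m`. -/
noncomputable def wl {m : ℕ} (g : IterBS m) : ℕ :=
  sInf { n | ∃ w : List (Fin (m + 1) × Bool), w.length = n ∧ evalWord w = g }

/-- The minimal word length of a conjugator taking `u` to `v`. -/
noncomputable def cLen {m : ℕ} (u v : IterBS m) : ℕ :=
  sInf { n | ∃ γ : IterBS m, γ * u * γ⁻¹ = v ∧ wl γ = n }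

/-- The conjugator length function of `IterBS m`. -/
noncomputable def CLGm (m : ℕ) (n : ℕ) : ℕ :=
  sSup { c | ∃ u v : List (Fin (m + 1) × Bool),
    u.length + v.length ≤ n ∧
    (∃ γ : IterBS m, γ * evalWord u * γ⁻¹ = evalWord v) ∧
    c = cLen (evalWord u) (evalWord v) }

variable {G : Type*} [Group G] {x y : G}

theorem zpowersHom_injective (hx : ¬IsOfFinOrder x) : Function.Injective (zpowersHom G x) :=
  (injective_zpow_iff_not_isOfFinOrder.2 hx).comp Multiplicative.toAdd.injective

noncomputable def mulEquivZPowersOfNotIsOfFinOrder (hx : ¬IsOfFinOrder x) :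
    Multiplicative ℤ ≃* Subgroup.zpowers x :=
  (MonoidHom.ofInjective (zpowersHom_injective hx)).trans
    (MulEquiv.subgroupCongr (Subgroup.range_zpowersHom x))

theorem mulEquivZPowersOfNotIsOfFinOrder_apply (hx : ¬IsOfFinOrder x) (n : Multiplicative ℤ) :
    (mulEquivZPowersOfNotIsOfFinOrder hx n : G) = x ^ n.toAdd :=
  rfl

noncomputable def zpowersMulEquivZPowers (hx : ¬IsOfFinOrder x) (hy : ¬IsOfFinOrder y) :
    Subgroup.zpowers x ≃* Subgroup.zpowers y :=
  (mulEquivZPowersOfNotIsOfFinOrder hx).symm.trans (mulEquivZPowersOfNotIsOfFinOrder hy)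

theorem zpowersMulEquivZPowers_apply_self (hx : ¬IsOfFinOrder x) (hy : ¬IsOfFinOrder y) :
    (zpowersMulEquivZPowers hx hy ⟨x, Subgroup.mem_zpowers x⟩ : G) = y := by
  have hgen : mulEquivZPowersOfNotIsOfFinOrder hx (Multiplicative.ofAdd 1) =
      ⟨x, Subgroup.mem_zpowers x⟩ := Subtype.ext (zpow_one x)
  rw [zpowersMulEquivZPowers, MulEquiv.trans_apply, ← hgen, MulEquiv.symm_apply_apply,
    mulEquivZPowersOfNotIsOfFinOrder_apply, toAdd_ofAdd, zpow_one]

namespace IterBS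

variable {m : ℕ}

theorem sg_conj (i : Fin m) :
    sg i.succ * sg i.castSucc * (sg i.succ)⁻¹ = (sg i.castSucc : IterBS m) ^ 2 := by
  refine mul_inv_eq_one.mp ?_
  have hrel : (PresentedGroup.mk (bsRels m) (FreeGroup.of i.succ * FreeGroup.of i.castSucc *
      (FreeGroup.of i.succ)⁻¹ * (FreeGroup.of i.castSucc ^ 2)⁻¹)) = 1 :=
    (QuotientGroup.eq_one_iff _).2 (Subgroup.subset_normalClosure ⟨i, rfl⟩)
  simpa [sg, PresentedGroup.of] using hrel

section Lift

variable {H : Type*} [Group H] (f : Fin (m + 1) → H)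
  (hf : ∀ i : Fin m, f i.succ * f i.castSucc * (f i.succ)⁻¹ = f i.castSucc ^ 2)

def lift : IterBS m →* H :=
  PresentedGroup.toGroup (f := f) (by rintro _ ⟨i, rfl⟩; simp [hf i])

theorem lift_sg (i : Fin (m + 1)) : lift f hf (sg i) = f i :=
  PresentedGroup.toGroup.of _

end Lift

theorem hom_ext {H : Type*} [Group H] {φ ψ : IterBS m →* H}
    (h : ∀ i, φ (sg i) = ψ (sg i)) : φ = ψ :=
  PresentedGroup.ext h

def expSumLast : IterBS m →* Multiplicative ℤ :=
  lift (Fin.lastCases (Multiplicative.ofAdd 1) fun _ => 1) (by simp)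

theorem not_isOfFinOrder_sg_last : ¬IsOfFinOrder (sg (Fin.last m) : IterBS m) := by
  intro h
  have h' := expSumLast.isOfFinOrder h
  rw [expSumLast, lift_sg, Fin.lastCases_last, isOfFinOrder_iff_eq_one, ofAdd_eq_one] at h'
  exact one_ne_zero h'

noncomputable def stableEquiv (m : ℕ) :
    Subgroup.zpowers (sg (Fin.last m) : IterBS m) ≃*
      Subgroup.zpowers ((sg (Fin.last m) : IterBS m) ^ 2) :=
  zpowersMulEquivZPowers not_isOfFinOrder_sg_last
    (by simpa [isOfFinOrder_pow] using not_isOfFinOrder_sg_last)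

def inclusion : IterBS m →* IterBS (m + 1) :=
  lift (fun i => sg i.castSucc) fun i => by
    simpa only [Fin.succ_castSucc] using sg_conj i.castSucc

theorem inclusion_sg (i : Fin (m + 1)) : inclusion (sg i) = sg i.castSucc :=
  lift_sg _ _ i

noncomputable def toHNNExtension :
    IterBS (m + 1) →* HNNExtension (IterBS m) _ _ (stableEquiv m) :=
  lift (Fin.lastCases HNNExtension.t fun i => HNNExtension.of (sg i)) fun i => by
    induction i using Fin.lastCases with
    | last =>
      simp only [Fin.succ_last, Fin.lastCases_last, Fin.lastCases_castSucc]
      rw [← HNNExtension.equiv_eq_conj (φ := stableEquiv m) ⟨_, Subgroup.mem_zpowers _⟩,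
        stableEquiv, zpowersMulEquivZPowers_apply_self, map_pow]
    | cast i =>
      simp only [Fin.succ_castSucc, Fin.lastCases_castSucc]
      rw [← map_pow, ← sg_conj, map_mul, map_mul, map_inv]

theorem toHNNExtension_comp_inclusion :
    (toHNNExtension (m := m)).comp inclusion = HNNExtension.of :=
  hom_ext fun i => by
    rw [MonoidHom.comp_apply, inclusion_sg, toHNNExtension, lift_sg, Fin.lastCases_castSucc]

theorem inclusion_injective : Function.Injective (inclusion (m := m)) := by
  refine Function.Injective.of_comp (f := toHNNExtension) ?_
  rw [← MonoidHom.coe_comp, toHNNExtension_comp_inclusion]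
  exact HNNExtension.of_injective (φ := stableEquiv m)

end IterBS

theorem iterBS_inclusion_injective_general (m : ℕ) :
    ∃ φ : IterBS m →* IterBS (m + 1),
      (∀ i : Fin (m + 1), φ (sg i) = sg i.castSucc) ∧ Function.Injective φ :=
  ⟨IterBS.inclusion (m := m), IterBS.inclusion_sg, IterBS.inclusion_injective⟩

/-- For every `m ≥ 1`, the homomorphism `i_m : G_m → G_{m+1}` determined by
`s_i ↦ s_i` is injective. -/
theorem iterBS_inclusion_injective (m : ℕ) (hm : 1 ≤ m) :
    ∃ φ : IterBS m →* IterBS (m + 1),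
      (∀ i : Fin (m + 1), φ (sg i) = sg i.castSucc) ∧ Function.Injective φ :=
  iterBS_inclusion_injective_general m
end

section
/- Let 0 ≤ i ≤ m and let g be an element of the subgroup of G_m generated by {s_i, s_{i+1}, …, s_m}. Then there exists a word w on the letters {s_i, …, s_m} and their inverses, of length exactly |g|_{G_m}, which represents g in G_m. -/
/-! The homomorphism `G_m → G_m` sending `s_j` to itself for `j ≥ i` and to `1` for `j < i`
is well defined, since each relation `s_{j+1} s_j s_{j+1}⁻¹ = s_j²` is either kept or becomes
trivial. It fixes the subgroup generated by `s_i, …, s_m`, and on words it deletes the letters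
`s_j^{±1}` with `j < i`. Applied to a geodesic word for `g`, it yields a word on the high
generators that represents `g` and is no longer than `|g|`, hence of length exactly `|g|`. -/

namespace IterBS

variable {m : ℕ}

lemma sg_conj_sg (j : Fin m) :
    sg j.succ * sg j.castSucc * (sg j.succ)⁻¹ = (sg j.castSucc : IterBS m) ^ 2 := by
  rw [← mul_inv_eq_one]
  exact PresentedGroup.one_of_mem ⟨j, rfl⟩

lemma evalWord_cons (a : Fin (m + 1) × Bool) (w : List (Fin (m + 1) × Bool)) :
    evalWord (a :: w) = (if a.2 then sg a.1 else (sg a.1)⁻¹) * evalWord w := by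
  simp [evalWord]

lemma evalWord_eq_mk (w : List (Fin (m + 1) × Bool)) :
    evalWord w = PresentedGroup.mk (bsRels m) (FreeGroup.mk w) := by
  have hlift : FreeGroup.lift sg = PresentedGroup.mk (bsRels m) :=
    FreeGroup.ext_hom _ _ fun _ => by simp [sg, PresentedGroup.of]
  rw [← hlift, FreeGroup.lift_mk, evalWord]
  simp only [cond_eq_ite]

lemma exists_evalWord_eq (g : IterBS m) : ∃ w : List (Fin (m + 1) × Bool), evalWord w = g := by
  obtain ⟨x, rfl⟩ := PresentedGroup.mk_surjective _ g
  exact ⟨x.toWord, by rw [evalWord_eq_mk, FreeGroup.mk_toWord]⟩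

lemma exists_length_eq_wl (g : IterBS m) :
    ∃ w : List (Fin (m + 1) × Bool), w.length = wl g ∧ evalWord w = g := by
  obtain ⟨w, hw⟩ := exists_evalWord_eq g
  exact Nat.sInf_mem
    (s := { n | ∃ w : List (Fin (m + 1) × Bool), w.length = n ∧ evalWord w = g })
    ⟨w.length, w, rfl, hw⟩

lemma wl_le_length {g : IterBS m} {w : List (Fin (m + 1) × Bool)} (hw : evalWord w = g) :
    wl g ≤ w.length :=
  Nat.sInf_le ⟨w, rfl, hw⟩

lemma lift_ite_sg_eq_one_of_mem_bsRels (i : ℕ) :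
    ∀ r ∈ bsRels m,
      FreeGroup.lift (fun j : Fin (m + 1) => if i ≤ (j : ℕ) then sg j else 1) r = 1 := by
  rintro r ⟨j, rfl⟩
  have hsucc : ((j.succ : Fin (m + 1)) : ℕ) = j + 1 := rfl
  have hcast : ((j.castSucc : Fin (m + 1)) : ℕ) = j := rfl
  simp only [map_mul, map_inv, map_pow, FreeGroup.lift_apply_of, hsucc, hcast]
  by_cases hj : i ≤ (j : ℕ)
  · rw [if_pos hj, if_pos (by omega), sg_conj_sg, mul_inv_cancel]
  · simp [if_neg hj]

noncomputable def retract (m i : ℕ) : IterBS m →* IterBS m :=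
  PresentedGroup.toGroup (lift_ite_sg_eq_one_of_mem_bsRels i)

variable {i : ℕ}

lemma retract_sg (j : Fin (m + 1)) : retract m i (sg j) = if i ≤ (j : ℕ) then sg j else 1 :=
  PresentedGroup.toGroup.of _

lemma retract_evalWord (w : List (Fin (m + 1) × Bool)) :
    retract m i (evalWord w) = evalWord (w.filter fun p => i ≤ (p.1 : ℕ)) := by
  induction w with
  | nil => simp [evalWord]
  | cons a w ih =>
    obtain ⟨j, b⟩ := a
    rw [evalWord_cons, map_mul, ih, List.filter_cons]
    by_cases hj : i ≤ (j : ℕ) <;> cases b <;> simp [hj, evalWord_cons, retract_sg]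

lemma retract_eq_self {g : IterBS m}
    (hg : g ∈ Subgroup.closure (sg '' { j : Fin (m + 1) | i ≤ (j : ℕ) })) :
    retract m i g = g := by
  induction hg using Subgroup.closure_induction with
  | mem x hx =>
    obtain ⟨j, hj, rfl⟩ := hx
    exact (retract_sg j).trans (if_pos hj)
  | one => exact map_one _
  | mul x y _ _ hx hy => rw [map_mul, hx, hy]
  | inv x _ hx => rw [map_inv, hx]

end IterBS

open IterBS in
theorem word_on_high_generators_general (m i : ℕ) (g : IterBS m)
    (hg : g ∈ Subgroup.closure (sg '' { j : Fin (m + 1) | i ≤ (j : ℕ) })) :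
    ∃ w : List (Fin (m + 1) × Bool), (∀ p ∈ w, i ≤ (p.1 : ℕ)) ∧
      w.length = wl g ∧ evalWord w = g := by
  obtain ⟨w, hw_len, hw⟩ := exists_length_eq_wl g
  set v := w.filter fun p => i ≤ (p.1 : ℕ)
  have hv : evalWord v = g := by rw [← retract_evalWord, hw, retract_eq_self hg]
  refine ⟨v, fun p hp => by simpa using List.of_mem_filter hp, ?_, hv⟩
  have : v.length ≤ w.length := List.length_filter_le _ _
  have := wl_le_length hv
  omega

/-- If `g` lies in the subgroup of `G_m` generated by `s_i, …, s_m`, then `g` is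
represented by a word on `{s_i, …, s_m}` of length exactly `|g|_{G_m}`. -/
theorem word_on_high_generators (m i : ℕ) (hi : i ≤ m) (g : IterBS m)
    (hg : g ∈ Subgroup.closure (sg '' { j : Fin (m + 1) | i ≤ (j : ℕ) })) :
    ∃ w : List (Fin (m + 1) × Bool), (∀ p ∈ w, i ≤ (p.1 : ℕ)) ∧
      w.length = wl g ∧ evalWord w = g :=
  word_on_high_generators_general m i g hg
end

section
/- For m ≥ 1 and all integers α, β, the word lengths in G_m satisfy |s_1^α s_0^β|_{G_m} ≥ |s_1^α|_{G_m}. -/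
section aux

lemma presented_rel_one {α : Type*} {rels : Set (FreeGroup α)} {r : FreeGroup α}
    (hr : r ∈ rels) : PresentedGroup.mk rels r = 1 := by
  have : r ∈ Subgroup.normalClosure rels := Subgroup.subset_normalClosure hr
  exact (QuotientGroup.eq_one_iff r).2 this

end aux

-- the killing homomorphism
noncomputable def killZero (m : ℕ) : IterBS m →* IterBS m :=
  PresentedGroup.toGroup (f := fun i : Fin (m+1) => if i = 0 then 1 else sg i)
    (by
      rintro r ⟨i, rfl⟩
      simp only [map_mul, map_inv, map_pow, FreeGroup.lift_apply_of]
      by_cases h : i.castSucc = 0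
      · have h2 : (i.succ : Fin (m+1)) ≠ 0 := Fin.succ_ne_zero i
        simp [h, h2]
      · have h2 : (i.succ : Fin (m+1)) ≠ 0 := Fin.succ_ne_zero i
        simp only [h, h2, if_neg, if_false]
        have := presented_rel_one (rels := bsRels m)
          (r := FreeGroup.of i.succ * FreeGroup.of i.castSucc * (FreeGroup.of i.succ)⁻¹ *
            (FreeGroup.of i.castSucc ^ 2)⁻¹) ⟨i, rfl⟩
        simpa [map_mul, map_inv, map_pow, sg, PresentedGroup.of] using this)

lemma killZero_sg {m : ℕ} (i : Fin (m+1)) :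
    killZero m (sg i) = if i = 0 then 1 else sg i :=
  PresentedGroup.toGroup.of _

lemma evalWord_cons {m : ℕ} (p : Fin (m + 1) × Bool) (w : List (Fin (m + 1) × Bool)) :
    evalWord (p :: w) = (if p.2 then sg p.1 else (sg p.1)⁻¹) * evalWord w := by
  simp [evalWord]

lemma evalWord_filter {m : ℕ} (w : List (Fin (m + 1) × Bool)) :
    evalWord (w.filter (fun p => p.1 ≠ 0)) = killZero m (evalWord w) := by
  induction w with
  | nil => simp [evalWord]
  | cons p w ih =>
    by_cases h : p.1 = 0
    · have hterm : killZero m (if p.2 then sg p.1 else (sg p.1)⁻¹) = 1 := by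
        rcases p.2 <;> simp [killZero_sg, h]
      rw [evalWord_cons, map_mul, hterm, one_mul, ← ih, List.filter_cons]
      simp [h]
    · have hterm : killZero m (if p.2 then sg p.1 else (sg p.1)⁻¹) =
          (if p.2 then sg p.1 else (sg p.1)⁻¹) := by
        rcases p.2 <;> simp [killZero_sg, h]
      rw [evalWord_cons, map_mul, hterm, List.filter_cons]
      simp only [h, ne_eq, not_false_iff, decide_true, if_true]
      rw [evalWord_cons, ih]

lemma evalWord_append {m : ℕ} (w₁ w₂ : List (Fin (m + 1) × Bool)) :
    evalWord (w₁ ++ w₂) = evalWord w₁ * evalWord w₂ := by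
  simp [evalWord]

lemma evalWord_replicate {m : ℕ} (i : Fin (m+1)) (b : Bool) (n : ℕ) :
    evalWord (List.replicate n (i, b)) = (if b then sg i else (sg i)⁻¹) ^ n := by
  induction n with
  | zero => simp [evalWord]
  | succ n ih => rw [List.replicate_succ, evalWord_cons, ih, pow_succ']

lemma exists_word_zpow {m : ℕ} (i : Fin (m+1)) (a : ℤ) :
    ∃ w : List (Fin (m + 1) × Bool), evalWord w = sg i ^ a := by
  obtain ⟨n, rfl | rfl⟩ := a.eq_nat_or_neg
  · exact ⟨List.replicate n (i, true), by simp [evalWord_replicate]⟩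
  · exact ⟨List.replicate n (i, false), by simp [evalWord_replicate, zpow_neg]⟩

/-- For all integers `α, β`, `|s₁^α s₀^β|_{G_m} ≥ |s₁^α|_{G_m}`. -/
theorem retract_shrinks_words (m : ℕ) (hm : 1 ≤ m) (α β : ℤ) :
    wl (sg (⟨1, by omega⟩ : Fin (m + 1)) ^ α) ≤
      wl (sg (⟨1, by omega⟩ : Fin (m + 1)) ^ α * sg (⟨0, by omega⟩ : Fin (m + 1)) ^ β) := by
  set i1 : Fin (m+1) := ⟨1, by omega⟩
  set i0 : Fin (m+1) := ⟨0, by omega⟩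
  obtain ⟨w1, hw1⟩ := exists_word_zpow i1 α
  obtain ⟨w0, hw0⟩ := exists_word_zpow i0 β
  have hne : {n | ∃ w : List (Fin (m + 1) × Bool), w.length = n ∧
      evalWord w = sg i1 ^ α * sg i0 ^ β}.Nonempty :=
    ⟨(w1 ++ w0).length, w1 ++ w0, rfl, by rw [evalWord_append, hw1, hw0]⟩
  obtain ⟨w, hwl, hwe⟩ := Nat.sInf_mem hne
  have hkill : killZero m (sg i1 ^ α * sg i0 ^ β) = sg i1 ^ α := by
    have h1 : i1 ≠ 0 := by simp [i1, Fin.ext_iff]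
    have h0 : i0 = 0 := by simp [i0, Fin.ext_iff]
    simp [map_mul, map_zpow, killZero_sg, h1, h0]
  have : evalWord (w.filter (fun p => p.1 ≠ 0)) = sg i1 ^ α := by
    rw [evalWord_filter, hwe, hkill]
  calc wl (sg i1 ^ α) ≤ (w.filter (fun p => p.1 ≠ 0)).length :=
        Nat.sInf_le ⟨_, rfl, this⟩
    _ ≤ w.length := List.length_filter_le _ _
    _ = _ := hwl
end

section
/- Let 0 ≤ i < m and let w be a word on the letters {s_0, …, s_{i+1}} and their inverses, of length n, containing exactly p occurrences of the letters s_{i+1}^{±1}, and suppose w represents an element of the cyclic subgroup ⟨s_i⟩ of G_m. Then w = s_i^ℓ in G_m for some integer ℓ with |ℓ| ≤ (n−p)·2^p; in particular |ℓ| ≤ 2^n. -/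
/-!
Let `G_m` act on `ℝ`: the generators `s_j` with `j < i` act trivially, `s_i` translates by `1`
and `s_{i+1}` doubles. The higher generators are obtained by iterating the map
`g ↦ sign · 2 ^ (g ∘ log₂)` on `Perm ℝ`, a homomorphism sending translation by `1` to doubling,
so that all defining relations hold. Following the orbit of `0` along `w`, each of the `n - p`
letters `s_j^{±1}` with `j ≤ i` moves a point by at most `1` and each of the `p` letters
`s_{i+1}^{±1}` at most doubles its absolute value, so `|w · 0| ≤ (n - p) 2^p`, while
`s_i^ℓ · 0 = ℓ`.
-/

open Real

theorem sub_mul_two_pow_le_two_pow (n p : ℕ) : (n - p) * 2 ^ p ≤ 2 ^ n := by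
  rcases le_or_gt p n with h | h
  · calc (n - p) * 2 ^ p ≤ 2 ^ (n - p) * 2 ^ p :=
        Nat.mul_le_mul_right _ Nat.lt_two_pow_self.le
      _ = 2 ^ n := by rw [← pow_add, Nat.sub_add_cancel h]
  · simp [Nat.sub_eq_zero_of_le h.le]

theorem iterate_conj_eq_sq {H : Type*} [Group H] (Φ : H →* H) {a : H}
    (ha : Φ a * a * (Φ a)⁻¹ = a ^ 2) (k : ℕ) :
    Φ^[k + 1] a * Φ^[k] a * (Φ^[k + 1] a)⁻¹ = Φ^[k] a ^ 2 := by
  induction k with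
  | zero => exact ha
  | succ k ih =>
    rw [Function.iterate_succ_apply' _ k] at ih
    rw [Function.iterate_succ_apply' _ (k + 1), Function.iterate_succ_apply' _ k, ← map_inv,
      ← map_mul, ← map_mul, ih, map_pow]

theorem addRight_one_zpow_apply (ℓ : ℤ) (x : ℝ) : (Equiv.addRight (1 : ℝ) ^ ℓ) x = x + ℓ := by
  induction ℓ using Int.induction_on generalizing x with
  | zero => simp
  | succ k ih =>
    rw [zpow_add_one, Equiv.Perm.mul_apply, Equiv.coe_addRight, ih]
    push_cast
    ring
  | pred k ih =>
    rw [zpow_sub_one, Equiv.Perm.mul_apply, Equiv.Perm.inv_def, Equiv.addRight_symm, ih]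
    simp
    ring

theorem mulLeft₀_two_conj_addRight_one :
    Equiv.mulLeft₀ 2 two_ne_zero * Equiv.addRight 1 * (Equiv.mulLeft₀ 2 two_ne_zero)⁻¹ =
      Equiv.addRight (1 : ℝ) ^ 2 := by
  ext x
  simp [pow_two, Equiv.Perm.mul_apply]
  ring

/-- Since `logb 2 x = logb 2 |x|` and `sign 0 = 0`, this is the odd extension of
`x ↦ 2 ^ g (log₂ x)` from `(0, ∞)` to `ℝ`. -/
noncomputable def signLogConj (g : ℝ → ℝ) (x : ℝ) : ℝ := SignType.sign x * 2 ^ g (logb 2 x)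

theorem signLogConj_comp (g h : ℝ → ℝ) (x : ℝ) :
    signLogConj g (signLogConj h x) = signLogConj (g ∘ h) x := by
  have hpos : (0 : ℝ) < 2 ^ h (logb 2 x) := by positivity
  have hlogb : logb 2 ((2 : ℝ) ^ h (logb 2 x)) = h (logb 2 x) :=
    logb_rpow two_pos (by norm_num)
  rcases lt_trichotomy x 0 with hx | rfl | hx
  · simp [signLogConj, sign_neg hx, sign_neg (neg_lt_zero.2 hpos), hlogb]
  · simp [signLogConj]
  · simp [signLogConj, sign_pos hx, sign_pos hpos, hlogb]

theorem signLogConj_id (x : ℝ) : signLogConj id x = x := by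
  rcases eq_or_ne x 0 with rfl | hx
  · simp [signLogConj]
  rw [signLogConj, id, ← logb_abs, rpow_logb two_pos (by norm_num) (abs_pos.2 hx), sign_mul_abs]

noncomputable def signLogConjHom : Equiv.Perm ℝ →* Equiv.Perm ℝ :=
  MonoidHom.mk'
    (fun g =>
      { toFun := signLogConj g
        invFun := signLogConj g.symm
        left_inv := fun x => by simp [signLogConj_comp, signLogConj_id]
        right_inv := fun x => by simp [signLogConj_comp, signLogConj_id] })
    (fun g h => Equiv.ext fun x => (signLogConj_comp g h x).symm)

theorem signLogConjHom_apply (g : Equiv.Perm ℝ) (x : ℝ) :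
    signLogConjHom g x = signLogConj g x :=
  rfl

theorem signLogConjHom_addRight_one :
    signLogConjHom (Equiv.addRight 1) = Equiv.mulLeft₀ 2 two_ne_zero := by
  ext x
  rw [signLogConjHom_apply, Equiv.coe_addRight]
  rcases eq_or_ne x 0 with rfl | hx
  · simp [signLogConj]
  rw [signLogConj, rpow_add_one two_ne_zero, ← logb_abs,
    rpow_logb two_pos (by norm_num) (abs_pos.2 hx), ← mul_assoc, sign_mul_abs]
  simp [mul_comm]

namespace IterBS

section Tower

variable {m : ℕ} {H : Type*} [Group H] (t : ℕ → H) (i : ℕ)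

theorem lift_tower_bsRels_eq_one (ht : ∀ k, t (k + 1) * t k * (t (k + 1))⁻¹ = t k ^ 2) :
    ∀ r ∈ bsRels m,
      FreeGroup.lift (fun j : Fin (m + 1) => if (j : ℕ) < i then 1 else t (j - i)) r = 1 := by
  rintro r ⟨k, rfl⟩
  simp only [map_mul, map_inv, map_pow, FreeGroup.lift_apply_of, Fin.val_succ, Fin.val_castSucc,
    mul_inv_eq_one]
  rcases lt_trichotomy ((k : ℕ) + 1) i with h | rfl | h
  · simp [h, (Nat.lt_succ_self _).trans h]
  · simp
  · rw [if_neg (by omega), if_neg (by omega), Nat.sub_add_comm (by omega)]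
    exact ht _

noncomputable def homOfTower (ht : ∀ k, t (k + 1) * t k * (t (k + 1))⁻¹ = t k ^ 2) :
    IterBS m →* H :=
  PresentedGroup.toGroup (lift_tower_bsRels_eq_one t i ht)

theorem homOfTower_sg (ht : ∀ k, t (k + 1) * t k * (t (k + 1))⁻¹ = t k ^ 2)
    (j : Fin (m + 1)) :
    homOfTower t i ht (sg j) = if (j : ℕ) < i then 1 else t (j - i) :=
  PresentedGroup.toGroup.of _

end Tower

variable {m : ℕ}

def letter (q : Fin (m + 1) × Bool) : IterBS m := if q.2 then sg q.1 else (sg q.1)⁻¹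

theorem evalWord_cons_s11 (q : Fin (m + 1) × Bool) (w : List (Fin (m + 1) × Bool)) :
    evalWord (q :: w) = letter q * evalWord w := by
  simp [evalWord, letter]

noncomputable def towerRep (m i : ℕ) : IterBS m →* Equiv.Perm ℝ :=
  homOfTower (fun k => signLogConjHom^[k] (Equiv.addRight 1)) i
    (iterate_conj_eq_sq _ (signLogConjHom_addRight_one ▸ mulLeft₀_two_conj_addRight_one))

variable {i : ℕ}

theorem towerRep_sg_of_lt {j : Fin (m + 1)} (hj : (j : ℕ) < i) : towerRep m i (sg j) = 1 := by
  rw [towerRep, homOfTower_sg, if_pos hj]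

theorem towerRep_sg_of_eq {j : Fin (m + 1)} (hj : (j : ℕ) = i) :
    towerRep m i (sg j) = Equiv.addRight 1 := by
  rw [towerRep, homOfTower_sg, if_neg hj.not_lt, hj, Nat.sub_self]
  rfl

theorem towerRep_sg_of_eq_add_one {j : Fin (m + 1)} (hj : (j : ℕ) = i + 1) :
    towerRep m i (sg j) = Equiv.mulLeft₀ 2 two_ne_zero := by
  rw [towerRep, homOfTower_sg, if_neg (by omega), hj, Nat.add_sub_cancel_left]
  exact signLogConjHom_addRight_one

theorem abs_towerRep_letter_le_add_one {j : Fin (m + 1)} (hj : (j : ℕ) ≤ i) (b : Bool) (x : ℝ) :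
    |towerRep m i (letter (j, b)) x| ≤ |x| + 1 := by
  rcases hj.lt_or_eq with hj | hj
  · cases b <;> simp [letter, towerRep_sg_of_lt hj]
  · cases b
    · simpa [letter, towerRep_sg_of_eq hj, sub_eq_add_neg] using abs_sub x 1
    · simpa [letter, towerRep_sg_of_eq hj] using abs_add_le x 1

theorem abs_towerRep_letter_le_two_mul {j : Fin (m + 1)} (hj : (j : ℕ) = i + 1) (b : Bool)
    (x : ℝ) : |towerRep m i (letter (j, b)) x| ≤ 2 * |x| := by
  cases b <;> simp [letter, towerRep_sg_of_eq_add_one hj, abs_mul]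
  linarith [abs_nonneg x]

theorem abs_towerRep_evalWord_zero_le (w : List (Fin (m + 1) × Bool))
    (hw : ∀ q ∈ w, (q.1 : ℕ) ≤ i + 1) :
    |towerRep m i (evalWord w) 0| ≤
      w.countP (fun q => (q.1 : ℕ) ≠ i + 1) * 2 ^ w.countP (fun q => (q.1 : ℕ) = i + 1) := by
  induction w with
  | nil => simp [evalWord]
  | cons q w ih =>
    obtain ⟨j, b⟩ := q
    have ih := ih fun q hq => hw q (List.mem_cons_of_mem _ hq)
    rw [evalWord_cons_s11, map_mul, Equiv.Perm.mul_apply]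
    by_cases hj : (j : ℕ) = i + 1
    · rw [List.countP_cons_of_neg (by simp [hj]), List.countP_cons_of_pos (by simp [hj]),
        pow_succ]
      calc _ ≤ 2 * |towerRep m i (evalWord w) 0| := abs_towerRep_letter_le_two_mul hj b _
        _ ≤ 2 * (w.countP (fun q => (q.1 : ℕ) ≠ i + 1) *
              2 ^ w.countP (fun q => (q.1 : ℕ) = i + 1)) := by gcongr
        _ = _ := by ring
    · have hj' : (j : ℕ) ≤ i := by
        have : (j : ℕ) ≤ i + 1 := hw (j, b) List.mem_cons_self
        omega
      rw [List.countP_cons_of_pos (by simp [hj]), List.countP_cons_of_neg (by simp [hj])]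
      have : (1 : ℝ) ≤ 2 ^ w.countP (fun q => (q.1 : ℕ) = i + 1) := one_le_pow₀ one_le_two
      calc _ ≤ |towerRep m i (evalWord w) 0| + 1 := abs_towerRep_letter_le_add_one hj' b _
        _ ≤ _ := by push_cast; linarith

end IterBS

/-- A word of length `n` on `{s₀, …, s_{i+1}}` with `p` occurrences of `s_{i+1}^{±1}`
representing a power of `s_i` equals `s_i^ℓ` with `|ℓ| ≤ (n-p)·2^p ≤ 2^n`. -/
theorem power_of_generator_length (m i : ℕ) (hi : i < m)
    (w : List (Fin (m + 1) × Bool)) (hw : ∀ p ∈ w, (p.1 : ℕ) ≤ i + 1)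
    (n p : ℕ) (hn : w.length = n)
    (hp : (w.filter (fun q => decide ((q.1 : ℕ) = i + 1))).length = p)
    (hmem : evalWord w ∈ Subgroup.zpowers (sg (⟨i, by omega⟩ : Fin (m + 1)))) :
    ∃ ℓ : ℤ, evalWord w = sg (⟨i, by omega⟩ : Fin (m + 1)) ^ ℓ ∧
      |ℓ| ≤ ((n - p) * 2 ^ p : ℕ) ∧ |ℓ| ≤ (2 ^ n : ℕ) := by
  obtain ⟨ℓ, hℓ⟩ := Subgroup.mem_zpowers_iff.mp hmem
  have hcount : w.countP (fun q => (q.1 : ℕ) ≠ i + 1) = n - p := by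
    have hsplit := List.length_eq_countP_add_countP
      (fun q : Fin (m + 1) × Bool => (q.1 : ℕ) = i + 1) (l := w)
    rw [← List.countP_eq_length_filter] at hp
    simp only [decide_eq_true_eq] at hsplit
    simp only [ne_eq]
    omega
  have hval : IterBS.towerRep m i (evalWord w) 0 = ℓ := by
    rw [← hℓ, map_zpow, IterBS.towerRep_sg_of_eq (j := ⟨i, by omega⟩) rfl,
      addRight_one_zpow_apply, zero_add]
  have hbound : |(ℓ : ℝ)| ≤ ((n - p) * 2 ^ p : ℕ) := by
    have := IterBS.abs_towerRep_evalWord_zero_le w hw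
    rw [hval, hcount, List.countP_eq_length_filter, hp] at this
    exact_mod_cast this
  have hbound' : |ℓ| ≤ ((n - p) * 2 ^ p : ℕ) := by exact_mod_cast hbound
  exact ⟨ℓ, hℓ.symm, hbound',
    hbound'.trans (by exact_mod_cast sub_mul_two_pow_le_two_pow n p)⟩
end

section
/- Let m ≥ 2, n ≥ 1, let α ≤ 0 be an integer, and let β = 2^{−α}·(E(m,n) − 1)/3 (which is an integer, since E(m,n) ≡ 1 mod 3 for m ≥ 2 and 2^{−α} ∈ ℤ). Then |s_1^α s_0^β|_G ≥ (E(m−1,n) − 1)/4. -/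
/-- Defining relations of the Baumslag–Gersten group in the presentation
`⟨s₀, s₁, t ∣ s₁ s₀ s₁⁻¹ = s₀², t s₀ t⁻¹ = s₁⟩`, with generator indices
`0 ↦ s₀`, `1 ↦ s₁`, `2 ↦ t`. -/
def bgRels : Set (FreeGroup (Fin 3)) :=
  { FreeGroup.of 1 * FreeGroup.of 0 * (FreeGroup.of 1)⁻¹ * (FreeGroup.of 0 ^ 2)⁻¹,
    FreeGroup.of 2 * FreeGroup.of 0 * (FreeGroup.of 2)⁻¹ * (FreeGroup.of 1)⁻¹ }

/-- The Baumslag–Gersten group. -/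
abbrev BG := PresentedGroup bgRels

/-- The generators of `BG`: `bg 0 = s₀`, `bg 1 = s₁`, `bg 2 = t`. -/
def bg (i : Fin 3) : BG := PresentedGroup.of i

/-- The element of `BG` represented by a word on the generators and their inverses. -/
def evalWordG (w : List (Fin 3 × Bool)) : BG :=
  (w.map (fun p => if p.2 then bg p.1 else (bg p.1)⁻¹)).prod

/-- Word length in `BG` with respect to the generators `s₀, s₁, t`. -/
noncomputable def wlG (g : BG) : ℕ :=
  sInf { n | ∃ w : List (Fin 3 × Bool), w.length = n ∧ evalWordG w = g }

/-- The minimal word length of a conjugator taking `u` to `v` in `BG`. -/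
noncomputable def cLenG (u v : BG) : ℕ :=
  sInf { n | ∃ γ : BG, γ * u * γ⁻¹ = v ∧ wlG γ = n }

/-- The conjugator length function of the Baumslag–Gersten group. -/
noncomputable def CLG (n : ℕ) : ℕ :=
  sSup { c | ∃ u v : List (Fin 3 × Bool),
    u.length + v.length ≤ n ∧
    (∃ γ : BG, γ * evalWordG u * γ⁻¹ = evalWordG v) ∧
    c = cLenG (evalWordG u) (evalWordG v) }

/-!
The Baumslag–Gersten group maps to the HNN extension of the group `Aff` of affine maps
`t ↦ 2 ^ a * t + b` of `ℚ` whose stable letter conjugates the integer translations onto the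
dilations, via `s₀ ↦ (t ↦ t + 1)` and `s₁ ↦ (t ↦ 2 t)`. Weigh an affine map by the signed binary
weights of `a` and `b` (the least number of terms `± 2 ^ e` summing to them), and a normal form in
the HNN extension by the total weight of its base-group letters. Multiplying by a generator raises
this potential by at most `2`: a base-group letter costs its own weight, and a stable letter only
splits some `b` into its integer and fractional parts. So the potential of `g` is at most
`2 |g|_G`.

Writing `E(m - 1, n) = 2 j`, the element `s₁ ^ α s₀ ^ β` maps into the base group, with
translation part a power of `2` times `(4 ^ j - 1) / 3 = 0101⋯01₂` (`j` ones). No signed binary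
expansion of this number is shorter, so `j ≤ 2 |s₁ ^ α s₀ ^ β|_G`.
-/

open Finsupp

/-! ### Signed binary weight -/

def digitValue (d : ℕ →₀ ℤ) : ℤ := d.sum fun e c => c * 2 ^ e

def digitWeight (d : ℕ →₀ ℤ) : ℕ := d.sum fun _ c => c.natAbs

lemma digitValue_add (d₁ d₂ : ℕ →₀ ℤ) :
    digitValue (d₁ + d₂) = digitValue d₁ + digitValue d₂ :=
  sum_add_index' (by simp) (by intros; ring)

@[simp] lemma digitValue_single (e : ℕ) (c : ℤ) : digitValue (single e c) = c * 2 ^ e := by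
  simp [digitValue]

lemma digitWeight_eq_sum {d : ℕ →₀ ℤ} {s : Finset ℕ} (h : d.support ⊆ s) :
    digitWeight d = ∑ e ∈ s, (d e).natAbs :=
  sum_of_support_subset d h _ fun _ _ => rfl

lemma digitWeight_add_le (d₁ d₂ : ℕ →₀ ℤ) :
    digitWeight (d₁ + d₂) ≤ digitWeight d₁ + digitWeight d₂ := by
  classical
  rw [digitWeight_eq_sum support_add, digitWeight_eq_sum Finset.subset_union_left,
    digitWeight_eq_sum Finset.subset_union_right, ← Finset.sum_add_distrib]
  exact Finset.sum_le_sum fun e _ => Int.natAbs_add_le _ _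

@[simp] lemma digitWeight_single (e : ℕ) (c : ℤ) : digitWeight (single e c) = c.natAbs := by
  simp [digitWeight]

lemma digitWeight_add_single (d : ℕ →₀ ℤ) (e : ℕ) (c : ℤ) :
    digitWeight (d + single e c) + (d e).natAbs = digitWeight d + (d e + c).natAbs := by
  have h := add_sum_erase' (d + single e c) e (fun _ c => c.natAbs) (fun _ => rfl)
  rw [erase_add, erase_single, add_zero] at h
  rw [digitWeight, digitWeight, ← h, ← add_sum_erase' d e (fun _ c => c.natAbs) (fun _ => rfl)]
  simp only [coe_add, Pi.add_apply, single_eq_same]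
  ring

noncomputable def shiftDigits (k : ℕ) (d : ℕ →₀ ℤ) : ℕ →₀ ℤ := d.mapDomain (· + k)

lemma digitValue_shiftDigits (k : ℕ) (d : ℕ →₀ ℤ) :
    digitValue (shiftDigits k d) = 2 ^ k * digitValue d := by
  rw [digitValue, shiftDigits, sum_mapDomain_index_inj (add_left_injective k), digitValue,
    mul_sum]
  exact Finset.sum_congr rfl fun e _ => by ring

lemma digitWeight_shiftDigits (k : ℕ) (d : ℕ →₀ ℤ) :
    digitWeight (shiftDigits k d) = digitWeight d :=
  sum_mapDomain_index_inj (add_left_injective k)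

theorem exists_digitValue_eq_natAbs_le_one (d : ℕ →₀ ℤ) :
    ∃ d' : ℕ →₀ ℤ, digitValue d' = digitValue d ∧ digitWeight d' ≤ digitWeight d ∧
      ∀ e, (d' e).natAbs ≤ 1 := by
  induction hn : digitWeight d using Nat.strong_induction_on generalizing d with
  | _ n ih =>
  by_cases hd : ∀ e, (d e).natAbs ≤ 1
  · exact ⟨d, rfl, hn.le, hd⟩
  push Not at hd
  obtain ⟨e, he⟩ := hd
  -- a digit `c` with `|c| ≥ 2` becomes `c - 2 sign c`, carrying `sign c` to the next place
  set ε := (d e).sign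
  have hε : (d e - 2 * ε).natAbs + 2 = (d e).natAbs ∧ ε.natAbs ≤ 1 := by
    rcases lt_trichotomy (d e) 0 with h | h | h
    · simp only [ε, Int.sign_eq_neg_one_of_neg h]; omega
    · omega
    · simp only [ε, Int.sign_eq_one_of_pos h]; omega
  set d₁ := d + single e (-(2 * ε)) + single (e + 1) ε
  have hval : digitValue d₁ = digitValue d := by
    simp only [d₁, digitValue_add, digitValue_single]; ring
  have hwt : digitWeight d₁ < n := by
    have h₁ : digitWeight d₁ ≤ _ := digitWeight_add_le (d + single e (-(2 * ε))) _
    have h₂ := digitWeight_add_single d e (-(2 * ε))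
    rw [digitWeight_single] at h₁
    rw [← sub_eq_add_neg] at h₂
    omega
  obtain ⟨d', h₁, h₂, h₃⟩ := ih _ hwt d₁ rfl
  exact ⟨d', h₁.trans hval, by omega, h₃⟩

lemma two_pow_succ_dvd_digitValue_sub {d : ℕ →₀ ℤ} {k : ℕ} (hk : ∀ e ∈ d.support, k ≤ e) :
    2 ^ (k + 1) ∣ digitValue d - d k * 2 ^ k := by
  have h : digitValue d = digitValue (d.erase k) + d k * 2 ^ k := by
    rw [← digitValue_single, ← digitValue_add, erase_add_single]
  rw [h, add_sub_cancel_right]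
  refine Finset.dvd_sum fun e he => Dvd.dvd.mul_left (pow_dvd_pow 2 ?_) _
  rw [support_erase, Finset.mem_erase] at he
  exact lt_of_le_of_ne (hk e he.2) (Ne.symm he.1)

lemma eq_zero_of_two_pow_dvd_digitValue {d : ℕ →₀ ℤ} (hd : ∀ e, (d e).natAbs ≤ 1) {k : ℕ}
    (hk : 2 ^ k ∣ digitValue d) : ∀ e < k, d e = 0 := by
  induction k with
  | zero => simp
  | succ k ih =>
    have hlow := ih ((pow_dvd_pow 2 k.le_succ).trans hk)
    intro e he
    rcases (Nat.lt_succ_iff.mp he).lt_or_eq with he | rfl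
    · exact hlow e he
    have hsupp : ∀ e' ∈ d.support, e ≤ e' := fun e' he' =>
      not_lt.mp fun h => mem_support_iff.mp he' (hlow e' h)
    have h₂ : 2 * 2 ^ e ∣ d e * 2 ^ e := by
      rw [← pow_succ']
      exact (dvd_sub_right hk).mp (two_pow_succ_dvd_digitValue_sub hsupp)
    have h₃ : (2 : ℤ) ∣ d e := (mul_dvd_mul_iff_right (pow_ne_zero e two_ne_zero)).mp h₂
    have := hd e
    omega

lemma abs_digitValue_lt {d : ℕ →₀ ℤ} (hd : ∀ e, (d e).natAbs ≤ 1) {k : ℕ}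
    (hk : ∀ e ∈ d.support, e < k) : |digitValue d| < 2 ^ k :=
  calc |digitValue d| ≤ ∑ e ∈ d.support, |d e * 2 ^ e| := Finset.abs_sum_le_sum_abs _ _
    _ ≤ ∑ e ∈ Finset.range k, 2 ^ e := by
      refine (Finset.sum_le_sum fun e _ => ?_).trans
        (Finset.sum_le_sum_of_subset_of_nonneg (fun e he => Finset.mem_range.mpr (hk e he))
          fun _ _ _ => by positivity)
      rw [abs_mul, abs_pow, abs_two]
      exact mul_le_of_le_one_left (by positivity) (by have := hd e; rw [Int.abs_eq_natAbs]; omega)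
    _ < 2 ^ k := by have := geom_sum_mul (2 : ℤ) k; norm_num at this; omega

structure BinRep (x : ℚ) where
  shift : ℕ
  digits : ℕ →₀ ℤ
  digitValue_eq : (digitValue digits : ℚ) = x * 2 ^ shift

/-- The least number of terms `± 2 ^ e` (`e ∈ ℤ`) with sum `x`; it is `⊤` unless `x` is dyadic. -/
noncomputable def dyadicWeight (x : ℚ) : ℕ∞ := ⨅ r : BinRep x, (digitWeight r.digits : ℕ∞)

lemma dyadicWeight_le {x : ℚ} (r : BinRep x) : dyadicWeight x ≤ digitWeight r.digits :=
  iInf_le _ r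

lemma exists_binRep_natAbs_le_one {x : ℚ} (hx : dyadicWeight x ≠ ⊤) :
    ∃ r : BinRep x, (digitWeight r.digits : ℕ∞) ≤ dyadicWeight x ∧
      ∀ e, (r.digits e).natAbs ≤ 1 := by
  have : Nonempty (BinRep x) := by
    by_contra h
    have := not_nonempty_iff.mp h
    exact hx (iInf_of_empty _)
  obtain ⟨r, hr⟩ := ENat.exists_eq_iInf fun r : BinRep x => (digitWeight r.digits : ℕ∞)
  obtain ⟨d, hv, hw, hd⟩ := exists_digitValue_eq_natAbs_le_one r.digits
  refine ⟨⟨r.shift, d, hv ▸ r.digitValue_eq⟩, ?_, hd⟩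
  rw [dyadicWeight, ← hr]
  exact_mod_cast hw

lemma dyadicWeight_add_le (x y : ℚ) :
    dyadicWeight (x + y) ≤ dyadicWeight x + dyadicWeight y := by
  simp_rw [dyadicWeight, ENat.iInf_add, ENat.add_iInf]
  refine le_iInf₂ fun r s => (dyadicWeight_le ⟨r.shift + s.shift,
    shiftDigits s.shift r.digits + shiftDigits r.shift s.digits, ?_⟩).trans ?_
  · push_cast [digitValue_add, digitValue_shiftDigits, r.digitValue_eq, s.digitValue_eq]
    ring
  · have := digitWeight_add_le (shiftDigits s.shift r.digits) (shiftDigits r.shift s.digits)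
    rw [digitWeight_shiftDigits, digitWeight_shiftDigits] at this
    exact_mod_cast this

lemma dyadicWeight_zpow_mul_le (z : ℤ) (x : ℚ) :
    dyadicWeight (2 ^ z * x) ≤ dyadicWeight x := by
  refine le_iInf fun r => (dyadicWeight_le ⟨r.shift + (-z).toNat,
    shiftDigits z.toNat r.digits, ?_⟩).trans_eq (by rw [digitWeight_shiftDigits])
  have hz : (2 : ℚ) ^ z = 2 ^ z.toNat / 2 ^ (-z).toNat := by
    rw [← zpow_natCast, ← zpow_natCast, ← zpow_sub₀ two_ne_zero, Int.toNat_sub_toNat_neg]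
  push_cast [digitValue_shiftDigits, r.digitValue_eq]
  rw [hz, pow_add]
  field_simp

@[simp] lemma dyadicWeight_zpow_mul (z : ℤ) (x : ℚ) :
    dyadicWeight (2 ^ z * x) = dyadicWeight x := by
  refine le_antisymm (dyadicWeight_zpow_mul_le z x) ?_
  simpa only [← mul_assoc, ← zpow_add₀ (two_ne_zero' ℚ), neg_add_cancel, zpow_zero, one_mul]
    using dyadicWeight_zpow_mul_le (-z) (2 ^ z * x)

@[simp] lemma dyadicWeight_pow_mul (k : ℕ) (x : ℚ) :
    dyadicWeight (2 ^ k * x) = dyadicWeight x := by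
  rw [← zpow_natCast, dyadicWeight_zpow_mul]

lemma dyadicWeight_intCast_le (k : ℤ) : dyadicWeight k ≤ k.natAbs :=
  (dyadicWeight_le ⟨0, single 0 k, by simp⟩).trans_eq (by simp)

@[simp] lemma dyadicWeight_zero : dyadicWeight 0 = 0 :=
  nonpos_iff_eq_zero.mp (by simpa using dyadicWeight_intCast_le 0)

lemma dyadicWeight_add_intCast_le (x : ℚ) (k : ℤ) :
    dyadicWeight (x + k) ≤ dyadicWeight x + k.natAbs :=
  (dyadicWeight_add_le x k).trans (add_le_add_right (dyadicWeight_intCast_le k) _)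

lemma exists_int_add_abs_lt_one (x : ℚ) : ∃ (a : ℤ) (b : ℚ), x = a + b ∧ |b| < 1 ∧
    dyadicWeight a + dyadicWeight b ≤ dyadicWeight x := by
  by_cases hx : dyadicWeight x = ⊤
  · refine ⟨⌊x⌋, Int.fract x, (Int.floor_add_fract x).symm, ?_, hx ▸ le_top⟩
    rw [abs_of_nonneg (Int.fract_nonneg x)]
    exact Int.fract_lt_one x
  classical
  -- split an expansion of `x` with digits in `{-1, 0, 1}` at the binary point
  obtain ⟨⟨j, d, hd⟩, hw, hnorm⟩ := exists_binRep_natAbs_le_one hx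
  obtain ⟨a, ha⟩ : 2 ^ j ∣ digitValue (d.filter (j ≤ ·)) := Finset.dvd_sum fun e he => by
    rw [support_filter, Finset.mem_filter] at he
    exact Dvd.dvd.mul_left (pow_dvd_pow 2 he.2) _
  set F := digitValue (d.filter fun e => ¬ j ≤ e)
  have hF : |F| < 2 ^ j := abs_digitValue_lt (fun e => by
    rw [filter_apply]; split_ifs <;> simp [hnorm e]) fun e he => by
    rw [support_filter, Finset.mem_filter] at he
    exact not_le.mp he.2
  have hsplit : (a : ℚ) * 2 ^ j + F = x * 2 ^ j := by
    rw [← hd, ← filter_add_filter_not d (j ≤ ·), digitValue_add, ha]; push_cast; ring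
  refine ⟨a, F / 2 ^ j, ?_, ?_, ?_⟩
  · field_simp; linarith
  · rw [abs_div, abs_pow, abs_two, div_lt_one (by positivity)]; exact_mod_cast hF
  · calc dyadicWeight a + dyadicWeight (F / 2 ^ j)
        ≤ digitWeight (d.filter (j ≤ ·)) + digitWeight (d.filter fun e => ¬ j ≤ e) :=
          add_le_add (dyadicWeight_le ⟨j, d.filter (j ≤ ·), by rw [ha]; push_cast; ring⟩)
            (dyadicWeight_le ⟨j, d.filter fun e => ¬ j ≤ e, by field_simp; rfl⟩)
      _ = digitWeight d := by
          rw [digitWeight, digitWeight, ← Nat.cast_add, sum_filter_add_sum_filter_not]; rfl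
      _ ≤ dyadicWeight x := hw

theorem dyadicWeight_floor_add_fract_le (x : ℚ) :
    dyadicWeight ⌊x⌋ + dyadicWeight (Int.fract x) ≤ dyadicWeight x + 2 := by
  obtain ⟨a, b, rfl, hb, hab⟩ := exists_int_add_abs_lt_one x
  have hδ : (⌊b⌋).natAbs ≤ 1 := by
    have h₁ : (⌊b⌋ : ℚ) ≤ b := Int.floor_le b
    have h₂ : b < ⌊b⌋ + 1 := Int.lt_floor_add_one b
    have h₃ : ⌊b⌋ < 1 := by exact_mod_cast h₁.trans_lt (abs_lt.mp hb).2
    have h₄ : -2 < ⌊b⌋ := by exact_mod_cast (by linarith [(abs_lt.mp hb).1] : (-2 : ℚ) < ⌊b⌋)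
    omega
  rw [Int.floor_intCast_add, Int.fract_intCast_add, Int.cast_add, Int.fract, sub_eq_add_neg,
    ← Int.cast_neg]
  calc _ ≤ (dyadicWeight a + 1) + (dyadicWeight b + 1) := by
        refine add_le_add ((dyadicWeight_add_intCast_le _ _).trans ?_)
          ((dyadicWeight_add_intCast_le _ _).trans ?_) <;>
        · gcongr; exact_mod_cast by simpa using hδ
    _ = (dyadicWeight a + dyadicWeight b) + 2 := by ring
    _ ≤ _ := by gcongr

/-- An expansion of an odd integer with digits in `{-1, 0, 1}` has the digit `± 1` at the place
`2 ^ 0`. -/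
theorem exists_dyadicWeight_sub_unit_add_one_le {x : ℤ} (hx : Odd x) :
    ∃ ε : ℤˣ, dyadicWeight ((x - ε : ℤ) : ℚ) + 1 ≤ dyadicWeight x := by
  by_cases htop : dyadicWeight x = ⊤
  · exact ⟨1, htop ▸ le_top⟩
  obtain ⟨⟨j, d, hd⟩, hw, hnorm⟩ := exists_binRep_natAbs_le_one htop
  dsimp only at hw hnorm
  have hdx : digitValue d = x * 2 ^ j := by exact_mod_cast hd
  have hlow := eq_zero_of_two_pow_dvd_digitValue hnorm (hdx ▸ dvd_mul_left _ _)
  have hsupp : ∀ e ∈ d.support, j ≤ e := fun e he =>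
    not_lt.mp fun h => mem_support_iff.mp he (hlow e h)
  have hodd : (2 : ℤ) ∣ x - d j := by
    refine (mul_dvd_mul_iff_right (pow_ne_zero j two_ne_zero)).mp ?_
    rw [← pow_succ', sub_mul, ← hdx]
    exact two_pow_succ_dvd_digitValue_sub hsupp
  have hunit : IsUnit (d j) := by
    obtain ⟨k, rfl⟩ := hx
    have := hnorm j
    exact Int.isUnit_iff.mpr (by omega)
  refine ⟨hunit.unit, ?_⟩
  have hwt := digitWeight_add_single d j (-d j)
  rw [add_neg_cancel, Int.natAbs_zero, add_zero, Int.isUnit_iff_natAbs_eq.mp hunit] at hwt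
  calc dyadicWeight ((x - d j : ℤ) : ℚ) + 1 ≤ digitWeight (d + single j (-d j)) + 1 := by
        gcongr
        refine dyadicWeight_le ⟨j, d + single j (-d j), ?_⟩
        push_cast [digitValue_add, digitValue_single, hd]
        ring
    _ = digitWeight d := by norm_cast
    _ ≤ _ := hw

lemma add_one_le_dyadicWeight_of_odd {x : ℤ} (hx : Odd x) {k : ℕ∞}
    (h : ∀ ε : ℤˣ, k ≤ dyadicWeight ((x - ε : ℤ) : ℚ)) : k + 1 ≤ dyadicWeight x :=
  let ⟨ε, hε⟩ := exists_dyadicWeight_sub_unit_add_one_le hx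
  (add_le_add_left (h ε) 1).trans hε

/-- `quadRepunit j = 1 + 4 + ⋯ + 4 ^ (j - 1)`, with binary expansion `0101⋯01`. -/
def quadRepunit : ℕ → ℤ
  | 0 => 0
  | j + 1 => 4 * quadRepunit j + 1

lemma three_mul_quadRepunit (j : ℕ) : 3 * quadRepunit j = 4 ^ j - 1 := by
  induction j with
  | zero => rfl
  | succ j ih => rw [quadRepunit, pow_succ]; linarith

/-- Removing the last digit `± 1` of `quadRepunit (j + 1)` or of `2 * quadRepunit j + 1` leaves,
up to a power of `2`, a member of one of the two families with index `j`. -/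
theorem le_dyadicWeight_quadRepunit (j : ℕ) :
    (j : ℕ∞) ≤ dyadicWeight (quadRepunit j) ∧
      (j + 1 : ℕ∞) ≤ dyadicWeight ((2 * quadRepunit j + 1 : ℤ) : ℚ) := by
  induction j with
  | zero =>
    refine ⟨by simp, add_one_le_dyadicWeight_of_odd (by simp [quadRepunit]) fun _ => ?_⟩
    simp
  | succ j ih =>
    have hodd : Odd (quadRepunit (j + 1)) := ⟨2 * quadRepunit j, by rw [quadRepunit]; ring⟩
    have h₁ : (j + 1 : ℕ∞) ≤ dyadicWeight (quadRepunit (j + 1)) := by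
      refine add_one_le_dyadicWeight_of_odd hodd fun ε => ?_
      rcases Int.units_eq_one_or ε with rfl | rfl
      · have : ((quadRepunit (j + 1) - (1 : ℤˣ) : ℤ) : ℚ) = 2 ^ 2 * (quadRepunit j : ℚ) := by
          rw [quadRepunit]; push_cast; ring
        rw [this, dyadicWeight_pow_mul]
        exact ih.1
      · have : ((quadRepunit (j + 1) - (-1 : ℤˣ) : ℤ) : ℚ) =
            2 ^ 1 * ((2 * quadRepunit j + 1 : ℤ) : ℚ) := by
          rw [quadRepunit]; push_cast; ring
        rw [this, dyadicWeight_pow_mul]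
        exact le_self_add.trans ih.2
    refine ⟨h₁, add_one_le_dyadicWeight_of_odd (by simp) fun ε => ?_⟩
    rcases Int.units_eq_one_or ε with rfl | rfl
    · have : ((2 * quadRepunit (j + 1) + 1 - (1 : ℤˣ) : ℤ) : ℚ) =
          2 ^ 1 * (quadRepunit (j + 1) : ℚ) := by
        push_cast; ring
      rw [this, dyadicWeight_pow_mul]
      exact_mod_cast h₁
    · have : ((2 * quadRepunit (j + 1) + 1 - (-1 : ℤˣ) : ℤ) : ℚ) =
          2 ^ 2 * ((2 * quadRepunit j + 1 : ℤ) : ℚ) := by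
        rw [quadRepunit]; push_cast; ring
      rw [this, dyadicWeight_pow_mul]
      exact_mod_cast ih.2

/-! ### The HNN model -/

lemma evalWordG_eq_mk (w : List (Fin 3 × Bool)) :
    evalWordG w = PresentedGroup.mk bgRels (FreeGroup.mk w) := by
  have : FreeGroup.lift bg = PresentedGroup.mk bgRels := FreeGroup.ext_hom _ _ fun _ => by
    rw [FreeGroup.lift_apply_of]; rfl
  rw [← this, FreeGroup.lift_mk, evalWordG]
  simp only [Bool.cond_eq_ite]

lemma evalWordG_surjective : Function.Surjective evalWordG := fun g => by
  obtain ⟨x, rfl⟩ := PresentedGroup.mk_surjective _ g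
  exact ⟨x.toWord, by rw [evalWordG_eq_mk, FreeGroup.mk_toWord]⟩

lemma exists_evalWordG_eq_length_eq_wlG (g : BG) :
    ∃ w, evalWordG w = g ∧ w.length = wlG g := by
  obtain ⟨w, hw, hlen⟩ := Nat.sInf_mem (s := {n | ∃ w, w.length = n ∧ evalWordG w = g})
    (let ⟨w, hw⟩ := evalWordG_surjective g; ⟨_, w, rfl, hw⟩)
  exact ⟨w, hlen, hw⟩


/-- `⟨a, b⟩` is the affine map `t ↦ 2 ^ a * t + b` of `ℚ`; multiplication is composition. -/
@[ext] structure Aff where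
  a : ℤ
  b : ℚ

namespace Aff

open HNNExtension HNNExtension.NormalWord

instance : Group Aff where
  mul x y := ⟨x.a + y.a, x.b + 2 ^ x.a * y.b⟩
  one := ⟨0, 0⟩
  inv x := ⟨-x.a, -(2 ^ (-x.a) * x.b)⟩
  mul_assoc x y z := by
    ext
    · exact add_assoc _ _ _
    · change x.b + 2 ^ x.a * y.b + 2 ^ (x.a + y.a) * z.b = x.b + 2 ^ x.a * (y.b + 2 ^ y.a * z.b)
      rw [zpow_add₀ two_ne_zero]; ring
  one_mul x := by
    ext
    · exact zero_add _
    · change 0 + 2 ^ (0 : ℤ) * x.b = x.b; simp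
  mul_one x := by
    ext
    · exact add_zero _
    · change x.b + 2 ^ x.a * 0 = x.b; simp
  inv_mul_cancel x := by
    ext
    · exact neg_add_cancel _
    · change -(2 ^ (-x.a) * x.b) + 2 ^ (-x.a) * x.b = 0; ring

@[simp] lemma one_a : (1 : Aff).a = 0 := rfl
@[simp] lemma one_b : (1 : Aff).b = 0 := rfl
@[simp] lemma mul_a (x y : Aff) : (x * y).a = x.a + y.a := rfl
@[simp] lemma mul_b (x y : Aff) : (x * y).b = x.b + 2 ^ x.a * y.b := rfl
@[simp] lemma inv_a (x : Aff) : x⁻¹.a = -x.a := rfl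
@[simp] lemma inv_b (x : Aff) : x⁻¹.b = -(2 ^ (-x.a) * x.b) := rfl

def translHom : Multiplicative ℤ →* Aff where
  toFun k := ⟨0, k.toAdd⟩
  map_one' := by ext <;> rfl
  map_mul' k l := by ext <;> simp

def scaleHom : Multiplicative ℤ →* Aff where
  toFun k := ⟨k.toAdd, 0⟩
  map_one' := by ext <;> rfl
  map_mul' k l := by ext <;> simp

@[simp] lemma translHom_apply (k : Multiplicative ℤ) : translHom k = ⟨0, k.toAdd⟩ := rfl

@[simp] lemma scaleHom_apply (k : Multiplicative ℤ) : scaleHom k = ⟨k.toAdd, 0⟩ := rfl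

lemma translHom_injective : Function.Injective translHom := fun k l h => by
  simpa using congrArg Aff.b h

lemma scaleHom_injective : Function.Injective scaleHom := fun k l h => by
  simpa using congrArg Aff.a h

noncomputable def φ : translHom.range ≃* scaleHom.range :=
  (MonoidHom.ofInjective translHom_injective).symm.trans (MonoidHom.ofInjective scaleHom_injective)

lemma φ_apply (k : Multiplicative ℤ) : (φ ⟨translHom k, k, rfl⟩ : Aff) = scaleHom k := by
  have : (MonoidHom.ofInjective translHom_injective).symm ⟨translHom k, k, rfl⟩ = k :=
    (MulEquiv.symm_apply_eq _).mpr (Subtype.ext (MonoidHom.ofInjective_apply _).symm)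
  simp only [φ, MulEquiv.trans_apply, this, MonoidHom.ofInjective_apply]

lemma φ_symm_apply (k : Multiplicative ℤ) :
    (φ.symm ⟨scaleHom k, k, rfl⟩ : Aff) = translHom k := by
  rw [(MulEquiv.symm_apply_eq φ).mpr (Subtype.ext (φ_apply k).symm)]

abbrev HNN := HNNExtension Aff translHom.range scaleHom.range φ

def s₀ : Aff := translHom (.ofAdd 1)

def s₁ : Aff := scaleHom (.ofAdd 1)

lemma s₀_zpow (k : ℤ) : s₀ ^ k = ⟨0, k⟩ := by
  rw [s₀, ← map_zpow translHom]
  simp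

lemma s₁_zpow (k : ℤ) : s₁ ^ k = ⟨k, 0⟩ := by
  rw [s₁, ← map_zpow scaleHom]
  simp

def transversal (u : ℤˣ) : Set Aff :=
  if u = 1 then {h | 0 ≤ h.b ∧ h.b < 1} else {h | h.a = 0}

lemma translHom_inv_mul (k : Multiplicative ℤ) (g : Aff) :
    (translHom k)⁻¹ * g = ⟨g.a, g.b - k.toAdd⟩ := by
  ext <;> simp; ring

lemma scaleHom_inv_mul (k : Multiplicative ℤ) (g : Aff) :
    (scaleHom k)⁻¹ * g = ⟨g.a - k.toAdd, 2 ^ (-k.toAdd) * g.b⟩ := by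
  ext <;> simp; ring

noncomputable def transversalPair : TransversalPair Aff translHom.range scaleHom.range where
  set := transversal
  compl u := by
    rw [Subgroup.isComplement_iff_existsUnique_inv_mul_mem]
    intro g
    rcases Int.units_eq_one_or u with rfl | rfl
    · refine ⟨⟨translHom (.ofAdd ⌊g.b⌋), _, rfl⟩, ?_, ?_⟩
      · change (translHom _)⁻¹ * g ∈ transversal 1
        rw [translHom_inv_mul, transversal, if_pos rfl]
        exact ⟨Int.fract_nonneg g.b, Int.fract_lt_one g.b⟩
      · rintro ⟨_, k, rfl⟩ hk
        simp only [transversal, if_true, translHom_inv_mul] at hk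
        have : ⌊g.b⌋ = k.toAdd := Int.floor_eq_iff.mpr ⟨by linarith [hk.1], by linarith [hk.2]⟩
        exact Subtype.ext (congrArg translHom this.symm)
    · refine ⟨⟨scaleHom (.ofAdd g.a), _, rfl⟩, ?_, ?_⟩
      · change (scaleHom _)⁻¹ * g ∈ transversal (-1)
        rw [scaleHom_inv_mul, transversal, if_neg (by decide)]
        exact sub_self g.a
      · rintro ⟨_, k, rfl⟩ hk
        simp only [transversal, scaleHom_inv_mul] at hk
        have : g.a = k.toAdd := sub_eq_zero.mp hk
        exact Subtype.ext (congrArg scaleHom this.symm)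

noncomputable def weight (h : Aff) : ℕ∞ := dyadicWeight h.b + dyadicWeight h.a

lemma weight_mul_le (g h : Aff) : weight (g * h) ≤ weight g + weight h :=
  calc weight (g * h)
      ≤ (dyadicWeight g.b + dyadicWeight h.b) + (dyadicWeight g.a + dyadicWeight h.a) := by
        rw [weight, mul_b, mul_a, Int.cast_add, ← dyadicWeight_zpow_mul g.a h.b]
        exact add_le_add (dyadicWeight_add_le _ _) (dyadicWeight_add_le _ _)
    _ = weight g + weight h := by rw [weight, weight]; ring

@[simp] lemma weight_translHom (k : Multiplicative ℤ) :
    weight (translHom k) = dyadicWeight k.toAdd := by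
  simp [weight]

@[simp] lemma weight_scaleHom (k : Multiplicative ℤ) :
    weight (scaleHom k) = dyadicWeight k.toAdd := by
  simp [weight]

lemma weight_toSubgroupEquiv (u : ℤˣ) (s : toSubgroup translHom.range scaleHom.range u) :
    weight (toSubgroupEquiv φ u s) = weight s := by
  rcases Int.units_eq_one_or u with rfl | rfl
  · obtain ⟨_, k, rfl⟩ := s
    change weight (φ ⟨translHom k, k, rfl⟩ : Aff) = _
    rw [φ_apply, weight_translHom, weight_scaleHom]
  · obtain ⟨_, k, rfl⟩ := s
    change weight (φ.symm ⟨scaleHom k, k, rfl⟩ : Aff) = _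
    rw [φ_symm_apply, weight_translHom, weight_scaleHom]

/-- For the integer translations, passing to the coset representative splits `b` into its
integer and fractional parts. -/
lemma weight_toSubgroupEquiv_add_weight_le (u : ℤˣ)
    (s : toSubgroup translHom.range scaleHom.range u) {t : Aff} (ht : t ∈ transversal u) :
    weight (toSubgroupEquiv φ u s) + weight t ≤ weight (s * t) + 2 := by
  rw [weight_toSubgroupEquiv]
  rcases Int.units_eq_one_or u with rfl | rfl
  · obtain ⟨_, k, rfl⟩ := s
    obtain ⟨ht₀, ht₁⟩ : 0 ≤ t.b ∧ t.b < 1 := by simpa [transversal] using ht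
    set x : ℚ := k.toAdd + t.b
    have hfloor : ⌊x⌋ = k.toAdd := by
      rw [Int.floor_intCast_add, Int.floor_eq_zero_iff.mpr ⟨ht₀, ht₁⟩, add_zero]
    have hfract : Int.fract x = t.b := by
      rw [Int.fract_intCast_add, Int.fract_eq_self.mpr ⟨ht₀, ht₁⟩]
    calc weight (translHom k) + weight t
        = dyadicWeight ⌊x⌋ + dyadicWeight (Int.fract x) + dyadicWeight t.a := by
          rw [hfloor, hfract, weight_translHom, weight, add_assoc]
      _ ≤ dyadicWeight x + 2 + dyadicWeight t.a :=
          add_le_add (dyadicWeight_floor_add_fract_le x) le_rfl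
      _ = weight (translHom k * t) + 2 := by simp [weight, x]; ring
  · obtain ⟨_, k, rfl⟩ := s
    have ht : t.a = 0 := by simpa [transversal] using ht
    calc weight (scaleHom k) + weight t = weight (scaleHom k * t) := by
          simp [weight, ht, add_comm]
      _ ≤ weight (scaleHom k * t) + 2 := le_self_add

noncomputable def potential (w : NormalWord transversalPair) : ℕ∞ :=
  weight w.head + (w.toList.map fun p => weight p.2).sum

lemma potential_smul_le (g : Aff) (w : NormalWord transversalPair) :
    potential (g • w) ≤ weight g + potential w := by
  rw [potential, potential, group_smul_head, group_smul_toList, ← add_assoc]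
  gcongr
  exact weight_mul_le _ _

lemma potential_cons (g : Aff) (u : ℤˣ) (w : NormalWord transversalPair) (h₁ h₂) :
    potential (cons g u w h₁ h₂) = weight g + potential w := by
  simp [potential]

lemma potential_unitsSMul_le (u : ℤˣ) (w : NormalWord transversalPair) :
    potential (unitsSMul φ u w) ≤ potential w + 2 := by
  unfold unitsSMul
  split_ifs with hcan
  · induction w using consRecOn with
    | ofGroup g => simp [Cancels] at hcan
    | cons g u' w h₁ h₂ _ =>
      simp only [unitsSMulWithCancel, consRecOn_cons]
      refine (potential_smul_le _ _).trans ?_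
      rw [weight_toSubgroupEquiv, potential_cons]
      exact le_self_add
  · have := weight_toSubgroupEquiv_add_weight_le u ((transversalPair.compl u).equiv w.head).1
      ((transversalPair.compl u).equiv w.head).2.2
    rw [Subgroup.IsComplement.equiv_fst_mul_equiv_snd] at this
    rw [potential_cons, potential, group_smul_head, group_smul_toList, inv_mul_cancel_right,
      unitsSMulGroup, potential, ← add_assoc, add_right_comm _ _ (2 : ℕ∞)]
    gcongr

lemma potential_of_smul_le {g : Aff} (hg : weight g ≤ 2) (w : NormalWord transversalPair) :
    potential ((of g : HNN) • w) ≤ potential w + 2 := by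
  rw [of_smul_eq_smul, add_comm]
  exact (potential_smul_le g w).trans (add_le_add hg le_rfl)

lemma potential_of_smul_empty (g : Aff) : potential ((of g : HNN) • empty) = weight g := by
  simp [of_smul_eq_smul, potential]

noncomputable def gensImage : Fin 3 → HNN := ![of s₀, of s₁, t]

lemma gensImage_rels : ∀ r ∈ bgRels, FreeGroup.lift gensImage r = 1 := by
  rintro r (rfl | rfl) <;>
    simp only [map_mul, map_inv, map_pow, FreeGroup.lift_apply_of, mul_inv_eq_one]
  · change of s₁ * of s₀ * (of s₁)⁻¹ = of s₀ ^ 2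
    rw [← map_inv, ← map_mul, ← map_mul, ← map_pow]
    congr 1
    ext <;> norm_num [s₀, s₁, pow_two]
  · exact (equiv_eq_conj ⟨s₀, MonoidHom.mem_range.mpr ⟨_, rfl⟩⟩).symm.trans
      (congrArg of (φ_apply _))

noncomputable def toHNN : BG →* HNN := PresentedGroup.toGroup gensImage_rels

lemma toHNN_bg (i : Fin 3) : toHNN (bg i) = gensImage i := PresentedGroup.toGroup.of _

lemma toHNN_bg_one_zpow_mul_bg_zero_zpow (a b : ℤ) :
    toHNN (bg 1 ^ a * bg 0 ^ b) = of ⟨a, 2 ^ a * b⟩ := by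
  rw [map_mul, map_zpow, map_zpow, toHNN_bg, toHNN_bg]
  change of s₁ ^ a * of s₀ ^ b = _
  rw [← map_zpow, ← map_zpow, ← map_mul, s₀_zpow, s₁_zpow]
  congr 1
  ext <;> simp

lemma potential_toHNN_bg_zpow_smul_le (i : Fin 3) (u : ℤˣ) (w : NormalWord transversalPair) :
    potential (toHNN (bg i ^ (u : ℤ)) • w) ≤ potential w + 2 := by
  rw [map_zpow, toHNN_bg]
  have hu : dyadicWeight (u : ℤ) ≤ 2 := (dyadicWeight_intCast_le u).trans (by simp)
  fin_cases i
  · change potential (of s₀ ^ (u : ℤ) • w) ≤ _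
    rw [← map_zpow]
    exact potential_of_smul_le (by simpa [s₀_zpow, weight] using hu) w
  · change potential (of s₁ ^ (u : ℤ) • w) ≤ _
    rw [← map_zpow]
    exact potential_of_smul_le (by simpa [s₁_zpow, weight] using hu) w
  · change potential (t ^ (u : ℤ) • w) ≤ _
    rw [t_pow_smul_eq_unitsSMul]
    exact potential_unitsSMul_le u w

lemma potential_toHNN_evalWordG_le (w : List (Fin 3 × Bool)) :
    potential (toHNN (evalWordG w) • empty) ≤ 2 * w.length := by
  induction w with
  | nil => simp [evalWordG, potential, weight]
  | cons p w ih =>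
    have hp : (if p.2 then bg p.1 else (bg p.1)⁻¹) =
        bg p.1 ^ ((if p.2 then 1 else -1 : ℤˣ) : ℤ) := by
      cases p.2 <;> simp
    rw [evalWordG, List.map_cons, List.prod_cons, ← evalWordG, hp, map_mul, mul_smul]
    calc _ ≤ potential (toHNN (evalWordG w) • empty) + 2 :=
          potential_toHNN_bg_zpow_smul_le _ _ _
      _ ≤ 2 * w.length + 2 := add_le_add ih le_rfl
      _ = 2 * (p :: w).length := by rw [List.length_cons]; push_cast; ring

lemma potential_toHNN_le_wlG (g : BG) : potential (toHNN g • empty) ≤ 2 * wlG g := by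
  obtain ⟨w, rfl, hw⟩ := exists_evalWordG_eq_length_eq_wlG g
  rw [← hw]
  exact potential_toHNN_evalWordG_le w

end Aff

lemma exists_E_sub_one_eq_two_mul (m n : ℕ) (hm : 2 ≤ m) (hn : 1 ≤ n) :
    ∃ j, E (m - 1) n = 2 * j ∧ E m n = 4 ^ j := by
  obtain ⟨k, rfl⟩ := Nat.exists_eq_add_of_le' hm
  have hpos : 1 ≤ E k n := by cases k <;> simp [E, Nat.one_le_two_pow, hn]
  refine ⟨2 ^ (E k n - 1), ?_, ?_⟩
  · change 2 ^ E k n = 2 * 2 ^ (E k n - 1)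
    rw [← pow_succ']
    congr 1
    omega
  · change 2 ^ (2 ^ E k n) = 4 ^ 2 ^ (E k n - 1)
    rw [show (4 : ℕ) = 2 ^ 2 from rfl, ← pow_mul, ← pow_succ']
    congr 2
    omega

theorem s1s0_length_lower_bound_gersten_general (m n : ℕ) (hm : 2 ≤ m) (hn : 1 ≤ n) (α β : ℤ)
    (hβ : 3 * β = 2 ^ (-α).toNat * ((E m n : ℤ) - 1)) :
    (E (m - 1) n : ℤ) - 1 ≤ 4 * wlG (bg 1 ^ α * bg 0 ^ β) := by
  obtain ⟨j, hj, hEm⟩ := exists_E_sub_one_eq_two_mul m n hm hn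
  have hβ' : β = 2 ^ (-α).toNat * quadRepunit j := by
    refine mul_left_cancel₀ (three_ne_zero' ℤ) ?_
    rw [hβ, hEm, mul_left_comm, three_mul_quadRepunit]
    push_cast
    ring
  have hlower : (j : ℕ∞) ≤ Aff.weight ⟨α, 2 ^ α * β⟩ :=
    calc (j : ℕ∞) ≤ dyadicWeight (quadRepunit j) := (le_dyadicWeight_quadRepunit j).1
      _ = dyadicWeight (2 ^ α * β) := by
        rw [dyadicWeight_zpow_mul, hβ', Int.cast_mul, Int.cast_pow, Int.cast_two,
          dyadicWeight_pow_mul]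
      _ ≤ Aff.weight ⟨α, 2 ^ α * β⟩ := le_self_add
  have hupper := Aff.potential_toHNN_le_wlG (bg 1 ^ α * bg 0 ^ β)
  rw [Aff.toHNN_bg_one_zpow_mul_bg_zero_zpow, Aff.potential_of_smul_empty] at hupper
  have : j ≤ 2 * wlG (bg 1 ^ α * bg 0 ^ β) := by exact_mod_cast hlower.trans hupper
  omega

/-- For `m ≥ 2`, `n ≥ 1`, `α ≤ 0` and `β = 2^{-α}·(E(m,n)-1)/3`, we have
`|s₁^α s₀^β|_G ≥ (E(m-1,n)-1)/4` in the Baumslag–Gersten group. -/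
theorem s1s0_length_lower_bound_gersten (m n : ℕ) (hm : 2 ≤ m) (hn : 1 ≤ n) (α β : ℤ)
    (hα : α ≤ 0) (hβ : 3 * β = 2 ^ (-α).toNat * ((E m n : ℤ) - 1)) :
    (E (m - 1) n : ℤ) - 1 ≤ 4 * wlG (bg 1 ^ α * bg 0 ^ β) :=
  s1s0_length_lower_bound_gersten_general m n hm hn α β hβ
end
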